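/- arXiv:1408.6388 — 11 statements merged into one kernel-verified Lean document; each statement's English description precedes it below -/
import Mathlib

section
/- Let G be a bipartite graph with vertex set partitioned into blue vertices V_B and red vertices V_R, and let b, b' be two distinct blue vertices with N(b) ⊆ N(b'). Then G has a set D ⊆ V_B of size at most k with every red vertex adjacent to some vertex of D if and only if the graph G - b (obtained by deleting b) has such a set. -/
open Set

/-- `G` is a red-blue bipartite graph with blue vertex set `blue` and red vertex set `red`:
the two sets partition the vertices and every edge joins a blue and a red vertex. -/
def RedBlue {V : Type*} (G : SimpleGraph V) (blue red : Set V) : Prop :=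
  Disjoint blue red ∧ blue ∪ red = Set.univ ∧
    ∀ a b, G.Adj a b → (a ∈ blue ∧ b ∈ red) ∨ (a ∈ red ∧ b ∈ blue)

/-- `D` dominates all vertices of `red`: every red vertex has a neighbor in `D`. -/
def Dominates {V : Type*} (G : SimpleGraph V) (D red : Set V) : Prop :=
  ∀ r ∈ red, ∃ d ∈ D, G.Adj d r

/-- Rule 1 is safe.  Deleting a blue vertex `b` whose neighborhood is contained
in that of another blue vertex `b'` preserves the existence of a red-blue dominating set of
size at most `k`.  (The graph `G - b` is encoded by restricting the dominating set to
`blue \ {b}`; since `b` is blue, the red vertices and all adjacencies among remaining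
vertices are unchanged.) -/
theorem rule1_safe {V : Type*} [Fintype V] (G : SimpleGraph V) (blue red : Set V)
    (hRB : RedBlue G blue red) (b b' : V) (hb : b ∈ blue) (hb' : b' ∈ blue) (hne : b ≠ b')
    (hsub : G.neighborSet b ⊆ G.neighborSet b') (k : ℕ) :
    (∃ D : Set V, D ⊆ blue ∧ D.ncard ≤ k ∧ Dominates G D red) ↔
    (∃ D : Set V, D ⊆ blue \ {b} ∧ D.ncard ≤ k ∧ Dominates G D red) := by
  constructor
  · rintro ⟨D, hDb, hDk, hDdom⟩
    by_cases hbD : b ∈ D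
    · refine ⟨(D \ {b}) ∪ {b'}, ?_, ?_, ?_⟩
      · rintro x (⟨hx, hxb⟩ | hx)
        · exact ⟨hDb hx, hxb⟩
        · simp only [mem_singleton_iff] at hx
          subst hx
          exact ⟨hb', fun h => hne (mem_singleton_iff.mp h).symm⟩
      · have h1 : ((D \ {b}) ∪ {b'}).ncard ≤ (D \ {b}).ncard + 1 := by
          simpa using Set.ncard_union_le (D \ {b}) {b'}
        have h2 : (D \ {b}).ncard + 1 = D.ncard := by
          have : (D \ {b}).ncard = D.ncard - 1 := by
            rw [Set.ncard_diff_singleton_of_mem hbD]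
          rw [this]
          have : 1 ≤ D.ncard := (Set.ncard_pos D.toFinite).mpr ⟨b, hbD⟩
          omega
        omega
      · intro r hr
        obtain ⟨d, hdD, hdr⟩ := hDdom r hr
        by_cases hdb : d = b
        · subst hdb
          exact ⟨b', Or.inr rfl, hsub hdr⟩
        · exact ⟨d, Or.inl ⟨hdD, hdb⟩, hdr⟩
    · exact ⟨D, fun x hx => ⟨hDb hx, fun h => hbD (h ▸ hx)⟩, hDk, hDdom⟩
  · rintro ⟨D, hDb, hDk, hDdom⟩
    exact ⟨D, fun x hx => (hDb hx).1, hDk, hDdom⟩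
end

section
/- Let G be a bipartite graph with blue vertices V_B and red vertices V_R, and let r, r' be two distinct red vertices with N(r') ⊆ N(r). Then G has a red-blue dominating set of size at most k if and only if G - r does. -/
open Set

/-- Rule 2 is safe.  Deleting a red vertex `r` whose neighborhood contains
that of another red vertex `r'` preserves the existence of a red-blue dominating set of
size at most `k`.  (In `G - r` the blue vertices are unchanged and the red vertices are
`red \ {r}`.) -/
theorem rule2_safe {V : Type*} [Fintype V] (G : SimpleGraph V) (blue red : Set V)
    (hRB : RedBlue G blue red) (r r' : V) (hr : r ∈ red) (hr' : r' ∈ red) (hne : r ≠ r')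
    (hsup : G.neighborSet r' ⊆ G.neighborSet r) (k : ℕ) :
    (∃ D : Set V, D ⊆ blue ∧ D.ncard ≤ k ∧ Dominates G D red) ↔
    (∃ D : Set V, D ⊆ blue ∧ D.ncard ≤ k ∧ Dominates G D (red \ {r})) := by
  constructor
  · rintro ⟨D, h1, h2, h3⟩
    exact ⟨D, h1, h2, fun v hv => h3 v hv.1⟩
  · rintro ⟨D, h1, h2, h3⟩
    refine ⟨D, h1, h2, fun v hv => ?_⟩
    by_cases hvr : v = r
    · subst hvr
      obtain ⟨d, hd, hadj⟩ := h3 r' ⟨hr', fun h => hne (h.symm)⟩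
      exact ⟨d, hd, (hsup hadj.symm).symm⟩
    · exact h3 v ⟨hv, hvr⟩
end

section
/- Let G be a bipartite red-blue graph and v a blue vertex whose private neighborhood P(v) = { r ∈ N(v) : N(N(r)) ⊆ N(v) } is nonempty. Then every red-blue dominating set of G of minimum size contains v, provided no two blue vertices have comparable neighborhoods and no two red vertices have comparable neighborhoods. -/
open Set

/-- The private neighborhood `P(v)` of a blue vertex `v`:
red neighbors `r` of `v` with `N(N(r)) ⊆ N(v)`. -/
def privNbhd {V : Type*} (G : SimpleGraph V) (v : V) : Set V :=
  {r | r ∈ G.neighborSet v ∧ ∀ b ∈ G.neighborSet r, G.neighborSet b ⊆ G.neighborSet v}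

/-- In a graph reduced under Rules 1 and 2, a blue vertex with nonempty private
neighborhood belongs to every minimum-size red-blue dominating set. -/
theorem private_forces_membership {V : Type*} [Fintype V] (G : SimpleGraph V)
    (blue red : Set V) (hRB : RedBlue G blue red)
    (hblue : ∀ b ∈ blue, ∀ b' ∈ blue, b ≠ b' → ¬ G.neighborSet b ⊆ G.neighborSet b')
    (hred : ∀ r ∈ red, ∀ r' ∈ red, r ≠ r' → ¬ G.neighborSet r' ⊆ G.neighborSet r)
    (v : V) (hv : v ∈ blue) (hP : (privNbhd G v).Nonempty)
    (D : Set V) (hD : D ⊆ blue) (hdom : Dominates G D red)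
    (hmin : ∀ D' : Set V, D' ⊆ blue → Dominates G D' red → D.ncard ≤ D'.ncard) :
    v ∈ D := by
  obtain ⟨r, hrN, hr2⟩ := hP
  have hadj : G.Adj v r := hrN
  have hrred : r ∈ red := by
    rcases hRB.2.2 v r hadj with h | h
    · exact h.2
    · exact absurd hv (Set.disjoint_left.mp hRB.1.symm h.1)
  obtain ⟨d, hdD, hdr⟩ := hdom r hrred
  have hsub : G.neighborSet d ⊆ G.neighborSet v := hr2 d hdr.symm
  by_cases hdv : d = v
  · exact hdv ▸ hdD
  · exact absurd hsub (hblue d (hD hdD) v hv hdv)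
end

section
/- Let G be a bipartite red-blue graph, and v a blue vertex with nonempty private neighborhood P(v). Let G' be obtained from G by deleting v and all vertices in N(v). Then G has a red-blue dominating set of size at most k if and only if G' has one of size at most k − 1, provided that in G no two blue vertices have comparable neighborhoods and no two red vertices have comparable neighborhoods. -/
open Set

/-- Rule 3 is safe.  If `v` is blue with nonempty private neighborhood, then
(in a graph reduced under Rules 1 and 2) `G` has a red-blue dominating set of size at most
`k` iff the graph obtained by deleting `v` and `N(v)` has one of size at most `k - 1`
(expressed as `ncard + 1 ≤ k`).  The deleted graph is encoded by restricting the dominating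
set to `blue \ ({v} ∪ N(v))` and the red vertices to `red \ ({v} ∪ N(v))`. -/
theorem rule3_safe {V : Type*} [Fintype V] (G : SimpleGraph V) (blue red : Set V)
    (hRB : RedBlue G blue red)
    (hblue : ∀ b ∈ blue, ∀ b' ∈ blue, b ≠ b' → ¬ G.neighborSet b ⊆ G.neighborSet b')
    (hred : ∀ r ∈ red, ∀ r' ∈ red, r ≠ r' → ¬ G.neighborSet r' ⊆ G.neighborSet r)
    (v : V) (hv : v ∈ blue) (hP : (privNbhd G v).Nonempty) (k : ℕ) :
    (∃ D : Set V, D ⊆ blue ∧ D.ncard ≤ k ∧ Dominates G D red) ↔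
    (∃ D : Set V, D ⊆ blue \ ({v} ∪ G.neighborSet v) ∧ D.ncard + 1 ≤ k ∧
      Dominates G D (red \ ({v} ∪ G.neighborSet v))) := by
  obtain ⟨hdisj, hcov, hadj⟩ := hRB
  obtain ⟨r0, hr0N, hr0P⟩ := hP
  have hVnotred : v ∉ red := fun h => Set.disjoint_left.mp hdisj hv h
  have hNred : G.neighborSet v ⊆ red := by
    intro r hr
    rcases hadj v r hr with ⟨_, h⟩ | ⟨h, _⟩
    · exact h
    · exact absurd h hVnotred
  constructor
  · rintro ⟨D, hDb, hDk, hDd⟩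
    obtain ⟨d, hdD, hdr⟩ := hDd r0 (hNred hr0N)
    have hdv : d = v := by
      by_contra hne
      exact hblue d (hDb hdD) v hv hne (hr0P d hdr.symm)
    subst hdv
    have heq : D \ ({d} ∪ G.neighborSet d) = D \ {d} := by
      ext x
      simp only [Set.mem_diff, Set.mem_union, Set.mem_singleton_iff]
      constructor
      · rintro ⟨hx, h2⟩; exact ⟨hx, fun h => h2 (Or.inl h)⟩
      · rintro ⟨hx, h2⟩
        refine ⟨hx, ?_⟩
        rintro (h | h)
        · exact h2 h
        · exact Set.disjoint_left.mp hdisj (hDb hx) (hNred h)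
    refine ⟨D \ ({d} ∪ G.neighborSet d), fun x hx => ⟨hDb hx.1, hx.2⟩, ?_, ?_⟩
    · rw [heq, Set.ncard_diff_singleton_add_one hdD (Set.toFinite D)]
      exact hDk
    · rintro r ⟨hr, hrN⟩
      obtain ⟨d', hd'D, hd'r⟩ := hDd r hr
      have hd'v : d' ≠ d := by
        rintro rfl
        exact hrN (Or.inr hd'r)
      refine ⟨d', ⟨hd'D, ?_⟩, hd'r⟩
      rintro (h | h)
      · exact hd'v h
      · exact Set.disjoint_left.mp hdisj (hDb hd'D) (hNred h)
  · rintro ⟨D, hDb, hDk, hDd⟩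
    refine ⟨insert v D, ?_, ?_, ?_⟩
    · rintro x (rfl | hx)
      · exact hv
      · exact (hDb hx).1
    · exact le_trans (Set.ncard_insert_le v D) hDk
    · intro r hr
      by_cases hrN : r ∈ G.neighborSet v
      · exact ⟨v, Set.mem_insert _ _, hrN⟩
      · have hrv : r ≠ v := fun h => hVnotred (h ▸ hr)
        obtain ⟨d, hd, hadjd⟩ := hDd r ⟨hr, by rintro (h | h); exacts [hrv h, hrN h]⟩
        exact ⟨d, Set.mem_insert_of_mem _ hd, hadjd⟩
end

section
/- Let G be a bipartite red-blue graph in which no blue vertex's neighborhood is contained in another blue vertex's neighborhood and no red vertex's neighborhood contains another red vertex's neighborhood. Then for a blue vertex v, the private neighborhood P(v) is nonempty if and only if there exists a red vertex r with N(v) = {r} and N(r) = {v} (i.e., v and r form a connected component consisting of a single edge). -/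
open Set

/-- In a graph reduced under Rules 1 and 2, a blue vertex `v` has nonempty
private neighborhood iff `v` together with a red vertex `r` forms a connected component
consisting of a single edge, i.e. `N(v) = {r}` and `N(r) = {v}`. -/
theorem private_iff_pendant {V : Type*} [Fintype V] (G : SimpleGraph V) (blue red : Set V)
    (hRB : RedBlue G blue red)
    (hblue : ∀ b ∈ blue, ∀ b' ∈ blue, b ≠ b' → ¬ G.neighborSet b ⊆ G.neighborSet b')
    (hred : ∀ r ∈ red, ∀ r' ∈ red, r ≠ r' → ¬ G.neighborSet r' ⊆ G.neighborSet r)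
    (v : V) (hv : v ∈ blue) :
    (privNbhd G v).Nonempty ↔
      ∃ r ∈ red, G.neighborSet v = {r} ∧ G.neighborSet r = {v} := by
  obtain ⟨hdisj, -, hedge⟩ := hRB
  have hredOf : ∀ x, G.Adj v x → x ∈ red := by
    intro x hx
    rcases hedge v x hx with ⟨-, h⟩ | ⟨h, -⟩
    · exact h
    · exact absurd (hdisj.ne_of_mem hv h rfl) (fun h => h)
  constructor
  · rintro ⟨r, hrN, hpriv⟩
    have hrNv : G.Adj v r := hrN
    have hrred : r ∈ red := hredOf r hrNv
    -- N(r) = {v}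
    have hNr : G.neighborSet r = {v} := by
      ext b
      simp only [Set.mem_singleton_iff]
      constructor
      · intro hb
        by_contra hbv
        have hbblue : b ∈ blue := by
          rcases hedge r b hb with ⟨h, -⟩ | ⟨-, h⟩
          · exact absurd (hdisj.ne_of_mem h hrred rfl) (fun h => h)
          · exact h
        exact hblue b hbblue v hv hbv (hpriv b hb)
      · rintro rfl; exact hrNv.symm
    refine ⟨r, hrred, ?_, hNr⟩
    -- N(v) = {r}
    ext r'
    simp only [Set.mem_singleton_iff]
    constructor
    · intro hr'
      have hr'red : r' ∈ red := hredOf r' hr'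
      by_contra hne
      refine hred r' hr'red r hrred hne ?_
      rw [hNr]
      intro x hx
      rcases hx with rfl
      exact SimpleGraph.Adj.symm hr'
    · rintro rfl; exact hrNv
  · rintro ⟨r, -, hNv, hNr⟩
    refine ⟨r, ?_, ?_⟩
    · rw [hNv]; rfl
    · intro b hb
      rw [hNr] at hb
      rcases hb with rfl
      exact fun x hx => hx
end

section
/- Let G be a bipartite red-blue graph reduced under Rules 1 and 2, and let v, w be two distinct blue vertices such that |P(v,w)| > 1, no blue vertex other than v, w dominates all of P(v,w), and P(v,w) ⊈ N(v) and P(v,w) ⊈ N(w). Let G' be obtained by deleting v, w, and N(v) ∪ N(w). Then G has a red-blue dominating set of size at most k if and only if G' has one of size at most k − 2. -/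
open Set

/-- The private neighborhood `P(v,w)` of a pair of blue vertices:
red vertices `r ∈ N(v) ∪ N(w)` with `N(N(r)) ⊆ N(v) ∪ N(w)`. -/
def privPair {V : Type*} (G : SimpleGraph V) (v w : V) : Set V :=
  {r | r ∈ G.neighborSet v ∪ G.neighborSet w ∧
    ∀ b ∈ G.neighborSet r, G.neighborSet b ⊆ G.neighborSet v ∪ G.neighborSet w}

/-- Case 1 of Rule 4 is safe.  With `|P(v,w)| > 1`, no third blue vertex
dominating `P(v,w)`, and `P(v,w)` contained in neither `N(v)` nor `N(w)`, deleting
`v`, `w` and `N(v) ∪ N(w)` and decreasing `k` by 2 is safe ("size at most `k - 2`"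
is expressed as `ncard + 2 ≤ k`). -/
theorem rule4_case1_safe {V : Type*} [Fintype V] (G : SimpleGraph V) (blue red : Set V)
    (hRB : RedBlue G blue red)
    (hblue : ∀ b ∈ blue, ∀ b' ∈ blue, b ≠ b' → ¬ G.neighborSet b ⊆ G.neighborSet b')
    (hred : ∀ r ∈ red, ∀ r' ∈ red, r ≠ r' → ¬ G.neighborSet r' ⊆ G.neighborSet r)
    (v w : V) (hv : v ∈ blue) (hw : w ∈ blue) (hvw : v ≠ w)
    (hPcard : 1 < (privPair G v w).ncard)
    (hnodom : ¬ ∃ d ∈ blue, d ≠ v ∧ d ≠ w ∧ privPair G v w ⊆ G.neighborSet d)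
    (hnv : ¬ privPair G v w ⊆ G.neighborSet v)
    (hnw : ¬ privPair G v w ⊆ G.neighborSet w) (k : ℕ) :
    (∃ D : Set V, D ⊆ blue ∧ D.ncard ≤ k ∧ Dominates G D red) ↔
    (∃ D : Set V, D ⊆ blue \ ({v, w} ∪ (G.neighborSet v ∪ G.neighborSet w)) ∧
      D.ncard + 2 ≤ k ∧
      Dominates G D (red \ ({v, w} ∪ (G.neighborSet v ∪ G.neighborSet w)))) := by
  obtain ⟨hdisj, hcover, hadj⟩ := hRB
  set P := privPair G v w with hPdef
  -- basic facts
  have hredN : ∀ b ∈ blue, ∀ r : V, G.Adj b r → r ∈ red := by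
    intro b hb r hbr
    rcases hadj b r hbr with ⟨_, hr⟩ | ⟨hb', _⟩
    · exact hr
    · exact (disjoint_right.mp hdisj hb' hb).elim
  have hblueN : ∀ b ∈ blue, b ∉ G.neighborSet v ∪ G.neighborSet w := by
    intro b hb hmem
    rcases hmem with h | h
    · exact disjoint_left.mp hdisj hb (hredN v hv b h)
    · exact disjoint_left.mp hdisj hb (hredN w hw b h)
  have hPred : P ⊆ red := by
    intro r hr
    rcases hr.1 with h | h
    · exact hredN v hv r h
    · exact hredN w hw r h
  constructor
  · rintro ⟨D, hDb, hDk, hDdom⟩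
    set S : Set V := {d ∈ D | ∃ r ∈ P, G.Adj d r} with hSdef
    have hSsub : S ⊆ D := fun d hd => hd.1
    have hSN : ∀ d ∈ S, G.neighborSet d ⊆ G.neighborSet v ∪ G.neighborSet w := by
      rintro d ⟨hdD, r, hrP, hadjdr⟩
      exact hrP.2 d (by simpa [SimpleGraph.mem_neighborSet] using hadjdr.symm)
    have hPdom' : ∀ r ∈ P, ∃ d ∈ S, G.Adj d r := by
      intro r hr
      obtain ⟨d, hdD, ha⟩ := hDdom r (hPred hr)
      exact ⟨d, ⟨hdD, r, hr, ha⟩, ha⟩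
    have hPne : P.Nonempty := by
      rcases Set.eq_empty_or_nonempty P with h | h
      · rw [h] at hPcard; simp at hPcard
      · exact h
    have hS2 : 2 ≤ S.ncard := by
      by_contra hlt
      push_neg at hlt
      obtain ⟨r0, hr0⟩ := hPne
      obtain ⟨d, hdS, _⟩ := hPdom' r0 hr0
      have hone : S.ncard ≤ 1 := by omega
      have hsing : ∀ a ∈ S, a = d := by
        intro a ha
        exact (Set.ncard_le_one (Set.toFinite S)).mp hone a ha d hdS
      have hPsub : P ⊆ G.neighborSet d := by
        intro r hr
        obtain ⟨d', hd'S, ha⟩ := hPdom' r hr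
        rw [hsing d' hd'S] at ha
        simpa [SimpleGraph.mem_neighborSet] using ha
      have hdblue : d ∈ blue := hDb (hSsub hdS)
      have hdv : d ≠ v := fun h => hnv (h ▸ hPsub)
      have hdw : d ≠ w := fun h => hnw (h ▸ hPsub)
      exact hnodom ⟨d, hdblue, hdv, hdw, hPsub⟩
    -- v ∈ D → v ∈ S, and same for w
    have hvS : v ∈ D → v ∈ S := by
      intro hvD
      obtain ⟨r, hrP, hrN⟩ := Set.not_subset.mp hnw
      have : r ∈ G.neighborSet v := by
        rcases hrP.1 with h | h
        · exact h
        · exact absurd h hrN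
      exact ⟨hvD, r, hrP, this⟩
    have hwS : w ∈ D → w ∈ S := by
      intro hwD
      obtain ⟨r, hrP, hrN⟩ := Set.not_subset.mp hnv
      have : r ∈ G.neighborSet w := by
        rcases hrP.1 with h | h
        · exact absurd h hrN
        · exact h
      exact ⟨hwD, r, hrP, this⟩
    refine ⟨D \ S, ?_, ?_, ?_⟩
    · intro x hx
      refine ⟨hDb hx.1, ?_⟩
      intro hmem
      rcases hmem with h | h
      · rcases h with h | h
        · exact hx.2 (h ▸ hvS (h ▸ hx.1))
        · simp only [Set.mem_singleton_iff] at h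
          exact hx.2 (h ▸ hwS (h ▸ hx.1))
      · exact hblueN x (hDb hx.1) h
    · have h1 : (D \ S).ncard = D.ncard - S.ncard := Set.ncard_diff hSsub (Set.toFinite S)
      have h2 : S.ncard ≤ D.ncard := Set.ncard_le_ncard hSsub (Set.toFinite D)
      omega
    · intro r hr
      obtain ⟨d, hdD, ha⟩ := hDdom r hr.1
      refine ⟨d, ⟨hdD, ?_⟩, ha⟩
      intro hdS
      exact hr.2 (Or.inr (hSN d hdS (by simpa [SimpleGraph.mem_neighborSet] using ha)))
  · rintro ⟨D, hDb, hDk, hDdom⟩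
    refine ⟨D ∪ {v, w}, ?_, ?_, ?_⟩
    · intro x hx
      rcases hx with h | h
      · exact (hDb h).1
      · rcases h with h | h
        · exact h ▸ hv
        · simp only [Set.mem_singleton_iff] at h; exact h ▸ hw
    · calc (D ∪ {v, w}).ncard ≤ D.ncard + ({v, w} : Set V).ncard :=
            Set.ncard_union_le D {v, w}
        _ ≤ D.ncard + 2 := by
            have : ({v, w} : Set V).ncard ≤ 2 := by
              apply le_trans (Set.ncard_insert_le v {w})
              simp [Set.ncard_singleton]
            omega
        _ ≤ k := hDk
    · intro r hr
      by_cases hdel : r ∈ ({v, w} : Set V) ∪ (G.neighborSet v ∪ G.neighborSet w)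
      · rcases hdel with h | h
        · have : r ∈ blue := by
            rcases h with h | h
            · exact h ▸ hv
            · simp only [Set.mem_singleton_iff] at h; exact h ▸ hw
          exact (disjoint_left.mp hdisj this hr).elim
        · rcases h with h | h
          · exact ⟨v, Or.inr (Or.inl rfl), h⟩
          · exact ⟨w, Or.inr (Or.inr rfl), h⟩
      · obtain ⟨d, hdD, ha⟩ := hDdom r ⟨hr, hdel⟩
        exact ⟨d, Or.inl hdD, ha⟩
end

section
/- Let G be a bipartite red-blue graph reduced under Rules 1 and 2, and let v, w be distinct blue vertices with |P(v,w)| > 1, no other blue vertex dominating P(v,w), and P(v,w) ⊆ N(v) ∩ N(w). Let G' be obtained by deleting P(v,w) and adding a new red vertex r adjacent exactly to v and w. Then G has a red-blue dominating set of size at most k if and only if G' does. -/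
open Set

/-- The graph obtained from `G` by adding one new vertex (the new red vertex) adjacent
exactly to `v` and `w`.  The new vertex is `Sum.inr ()`. -/
def addRed {V : Type*} (G : SimpleGraph V) (v w : V) : SimpleGraph (V ⊕ Unit) where
  Adj x y :=
    match x, y with
    | .inl a, .inl b => G.Adj a b
    | .inl a, .inr _ => a = v ∨ a = w
    | .inr _, .inl a => a = v ∨ a = w
    | .inr _, .inr _ => False
  symm := ⟨by rintro (a | a) (b | b) h <;> simp_all <;> exact h.symm⟩
  loopless := ⟨by rintro (a | a) h <;> simp_all⟩

/-- Case 2 of Rule 4 is safe.  With `|P(v,w)| > 1`, no third blue vertex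
dominating `P(v,w)`, and `P(v,w) ⊆ N(v) ∩ N(w)`, the graph `G'` obtained by deleting
`P(v,w)` and adding a new red vertex adjacent exactly to `v` and `w` has a red-blue
dominating set of size at most `k` iff `G` does.  In `G'` the blue vertices are
`Sum.inl '' blue` and the red vertices are `Sum.inl '' (red \ P(v,w)) ∪ {Sum.inr ()}`. -/
theorem rule4_case2_safe {V : Type*} [Fintype V] (G : SimpleGraph V) (blue red : Set V)
    (hRB : RedBlue G blue red)
    (hblue : ∀ b ∈ blue, ∀ b' ∈ blue, b ≠ b' → ¬ G.neighborSet b ⊆ G.neighborSet b')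
    (hred : ∀ r ∈ red, ∀ r' ∈ red, r ≠ r' → ¬ G.neighborSet r' ⊆ G.neighborSet r)
    (v w : V) (hv : v ∈ blue) (hw : w ∈ blue) (hvw : v ≠ w)
    (hPcard : 1 < (privPair G v w).ncard)
    (hnodom : ¬ ∃ d ∈ blue, d ≠ v ∧ d ≠ w ∧ privPair G v w ⊆ G.neighborSet d)
    (hPv : privPair G v w ⊆ G.neighborSet v) (hPw : privPair G v w ⊆ G.neighborSet w)
    (k : ℕ) :
    (∃ D : Set V, D ⊆ blue ∧ D.ncard ≤ k ∧ Dominates G D red) ↔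
    (∃ D' : Set (V ⊕ Unit), D' ⊆ Sum.inl '' blue ∧ D'.ncard ≤ k ∧
      Dominates (addRed G v w) D'
        (Sum.inl '' (red \ privPair G v w) ∪ {Sum.inr ()})) := by

  obtain ⟨hdisj, hcover, hadj⟩ := hRB
  have hPred : privPair G v w ⊆ red := by
    intro p hp
    rcases hp.1 with h | h
    · rcases hadj v p h with ⟨_, hpr⟩ | ⟨hvr, _⟩
      · exact hpr
      · exact absurd hvr (Set.disjoint_left.mp hdisj hv)
    · rcases hadj w p h with ⟨_, hpr⟩ | ⟨hwr, _⟩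
      · exact hpr
      · exact absurd hwr (Set.disjoint_left.mp hdisj hw)
  constructor
  · rintro ⟨D, hDblue, hDk, hDdom⟩
    by_cases hvwD : v ∈ D ∨ w ∈ D
    · refine ⟨Sum.inl '' D, Set.image_mono hDblue, ?_, ?_⟩
      · rwa [Set.ncard_image_of_injective _ Sum.inl_injective]
      · rintro x (⟨r, ⟨hr, hrP⟩, rfl⟩ | rfl)
        · obtain ⟨d, hd, hadj'⟩ := hDdom r hr
          exact ⟨Sum.inl d, Set.mem_image_of_mem _ hd, hadj'⟩
        · rcases hvwD with h | h
          · exact ⟨Sum.inl v, Set.mem_image_of_mem _ h, Or.inl rfl⟩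
          · exact ⟨Sum.inl w, Set.mem_image_of_mem _ h, Or.inr rfl⟩
    · push_neg at hvwD
      obtain ⟨hvD, hwD⟩ := hvwD
      set A := {d ∈ D | ∃ p ∈ privPair G v w, G.Adj d p} with hA
      have hAD : A ⊆ D := fun d hd => hd.1
      have hAnbr : ∀ d ∈ A, G.neighborSet d ⊆ G.neighborSet v ∪ G.neighborSet w := by
        rintro d ⟨hdD, p, hp, hdp⟩
        exact hp.2 d hdp.symm
      obtain ⟨p₀, hp₀⟩ := Set.nonempty_of_ncard_ne_zero
        (by omega : (privPair G v w).ncard ≠ 0)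
      obtain ⟨d₀, hd₀D, hd₀p⟩ := hDdom p₀ (hPred hp₀)
      have hd₀A : d₀ ∈ A := ⟨hd₀D, p₀, hp₀, hd₀p⟩
      have hA2 : 2 ≤ A.ncard := by
        by_contra hcon
        push_neg at hcon
        have hsub : A ⊆ {d₀} := by
          intro d hd
          by_contra hne
          have : 1 < A.ncard := (Set.one_lt_ncard A.toFinite).mpr ⟨d, hd, d₀, hd₀A, hne⟩
          omega
        have hPd : privPair G v w ⊆ G.neighborSet d₀ := by
          intro p hp
          obtain ⟨d, hdD, hdp⟩ := hDdom p (hPred hp)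
          have hdA : d ∈ A := ⟨hdD, p, hp, hdp⟩
          have := hsub hdA
          simp only [Set.mem_singleton_iff] at this
          subst this
          exact hdp
        exact hnodom ⟨d₀, hDblue hd₀D, fun h => hvD (h ▸ hd₀D),
          fun h => hwD (h ▸ hd₀D), hPd⟩
      refine ⟨Sum.inl '' ((D \ A) ∪ {v, w}), ?_, ?_, ?_⟩
      · apply Set.image_mono
        apply Set.union_subset (Set.diff_subset.trans hDblue)
        intro x hx
        rcases hx with rfl | rfl
        · exact hv
        · exact hw
      · rw [Set.ncard_image_of_injective _ Sum.inl_injective]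
        have h1 : ((D \ A) ∪ {v, w}).ncard ≤ (D \ A).ncard + ({v, w} : Set V).ncard :=
          Set.ncard_union_le _ _
        have h2 : ({v, w} : Set V).ncard = 2 := Set.ncard_pair hvw
        have h3 : (D \ A).ncard = D.ncard - A.ncard := Set.ncard_diff hAD
        have h4 : A.ncard ≤ D.ncard := Set.ncard_le_ncard hAD D.toFinite
        omega
      · rintro x (⟨r, ⟨hr, hrP⟩, rfl⟩ | rfl)
        · obtain ⟨d, hdD, hdr⟩ := hDdom r hr
          by_cases hdA : d ∈ A
          · rcases hAnbr d hdA hdr with h | h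
            · exact ⟨Sum.inl v, Set.mem_image_of_mem _ (Or.inr (Or.inl rfl)), h⟩
            · exact ⟨Sum.inl w, Set.mem_image_of_mem _ (Or.inr (Or.inr rfl)), h⟩
          · exact ⟨Sum.inl d, Set.mem_image_of_mem _ (Or.inl ⟨hdD, hdA⟩), hdr⟩
        · exact ⟨Sum.inl v, Set.mem_image_of_mem _ (Or.inr (Or.inl rfl)), Or.inl rfl⟩
  · rintro ⟨D', hD'blue, hD'k, hD'dom⟩
    set D := Sum.inl ⁻¹' D' with hD
    have hDeq : Sum.inl '' D = D' := by
      apply Set.Subset.antisymm (Set.image_preimage_subset _ _)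
      intro x hx
      obtain ⟨b, hb, rfl⟩ := hD'blue hx
      exact ⟨b, hx, rfl⟩
    refine ⟨D, ?_, ?_, ?_⟩
    · intro d hd
      obtain ⟨b, hb, heq⟩ := hD'blue hd
      rwa [Sum.inl_injective heq] at hb
    · rwa [← hDeq, Set.ncard_image_of_injective _ Sum.inl_injective] at hD'k
    · have hvwD : v ∈ D ∨ w ∈ D := by
        obtain ⟨d, hd, hadj'⟩ := hD'dom (Sum.inr ()) (Or.inr rfl)
        obtain ⟨b, hb, rfl⟩ := hD'blue hd
        rcases hadj' with rfl | rfl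
        · exact Or.inl hd
        · exact Or.inr hd
      intro x hx
      by_cases hxP : x ∈ privPair G v w
      · rcases hvwD with h | h
        · exact ⟨v, h, hPv hxP⟩
        · exact ⟨w, h, hPw hxP⟩
      · obtain ⟨d, hd, hadj'⟩ := hD'dom (Sum.inl x) (Or.inl ⟨x, ⟨hx, hxP⟩, rfl⟩)
        obtain ⟨b, hb, rfl⟩ := hD'blue hd
        exact ⟨b, hd, hadj'⟩
end

section
/- Let G be a bipartite red-blue graph reduced under Rules 1 and 2, and let v, w be distinct blue vertices with |P(v,w)| > 1, no blue vertex other than v, w dominating P(v,w), P(v,w) ⊆ N(v), and P(v,w) ⊈ N(w). Let G' be obtained by deleting v and N(v). Then G has a red-blue dominating set of size at most k if and only if G' has one of size at most k − 1. -/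
open Set

/-- Case 3 of Rule 4 is safe.  With `|P(v,w)| > 1`, no third blue vertex
dominating `P(v,w)`, `P(v,w) ⊆ N(v)` and `P(v,w) ⊈ N(w)`, deleting `v` and `N(v)`
and decreasing `k` by 1 is safe ("size at most `k - 1`" is expressed as
`ncard + 1 ≤ k`). -/
theorem rule4_case3_safe {V : Type*} [Fintype V] (G : SimpleGraph V) (blue red : Set V)
    (hRB : RedBlue G blue red)
    (hblue : ∀ b ∈ blue, ∀ b' ∈ blue, b ≠ b' → ¬ G.neighborSet b ⊆ G.neighborSet b')
    (hred : ∀ r ∈ red, ∀ r' ∈ red, r ≠ r' → ¬ G.neighborSet r' ⊆ G.neighborSet r)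
    (v w : V) (hv : v ∈ blue) (hw : w ∈ blue) (hvw : v ≠ w)
    (hPcard : 1 < (privPair G v w).ncard)
    (hnodom : ¬ ∃ d ∈ blue, d ≠ v ∧ d ≠ w ∧ privPair G v w ⊆ G.neighborSet d)
    (hPv : privPair G v w ⊆ G.neighborSet v)
    (hPw : ¬ privPair G v w ⊆ G.neighborSet w) (k : ℕ) :
    (∃ D : Set V, D ⊆ blue ∧ D.ncard ≤ k ∧ Dominates G D red) ↔
    (∃ D : Set V, D ⊆ blue \ ({v} ∪ G.neighborSet v) ∧ D.ncard + 1 ≤ k ∧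
      Dominates G D (red \ ({v} ∪ G.neighborSet v))) := by
  obtain ⟨hdisj, -, hadj⟩ := hRB
  have hNred : ∀ b ∈ blue, G.neighborSet b ⊆ red := by
    intro b hb r hr
    rcases hadj b r hr with ⟨_, h⟩ | ⟨h, _⟩
    · exact h
    · exact absurd rfl (hdisj.ne_of_mem hb h)
  constructor
  · rintro ⟨D, hDb, hDk, hDdom⟩
    -- Step 1: find a dominating set of size ≤ k containing v.
    have key : ∃ D₂, D₂ ⊆ blue ∧ D₂.ncard ≤ k ∧ v ∈ D₂ ∧ Dominates G D₂ red := by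
      by_cases hvD : v ∈ D
      · exact ⟨D, hDb, hDk, hvD, hDdom⟩
      obtain ⟨r₀, hr₀P, hr₀w⟩ := not_subset.mp hPw
      have hr₀v : r₀ ∈ G.neighborSet v := hPv hr₀P
      have hr₀red : r₀ ∈ red := hNred v hv hr₀v
      obtain ⟨d₀, hd₀D, hd₀adj⟩ := hDdom r₀ hr₀red
      have hd₀blue : d₀ ∈ blue := hDb hd₀D
      have hd₀v : d₀ ≠ v := fun h => hvD (h ▸ hd₀D)
      have hd₀w : d₀ ≠ w := by
        rintro rfl; exact hr₀w hd₀adj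
      have hNd₀ : G.neighborSet d₀ ⊆ G.neighborSet v ∪ G.neighborSet w :=
        hr₀P.2 d₀ hd₀adj.symm
      have hnot : ¬ privPair G v w ⊆ G.neighborSet d₀ := fun h =>
        hnodom ⟨d₀, hd₀blue, hd₀v, hd₀w, h⟩
      obtain ⟨r₁, hr₁P, hr₁d₀⟩ := not_subset.mp hnot
      have hr₁red : r₁ ∈ red := hNred v hv (hPv hr₁P)
      obtain ⟨d₁, hd₁D, hd₁adj⟩ := hDdom r₁ hr₁red
      have hd₁v : d₁ ≠ v := fun h => hvD (h ▸ hd₁D)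
      have hd₁d₀ : d₁ ≠ d₀ := by
        rintro rfl; exact hr₁d₀ hd₁adj
      by_cases hwD : w ∈ D
      · refine ⟨insert v (D \ {d₀}), ?_, ?_, mem_insert _ _, ?_⟩
        · exact insert_subset hv ((diff_subset).trans hDb)
        · calc (insert v (D \ {d₀})).ncard ≤ (D \ {d₀}).ncard + 1 := Set.ncard_insert_le _ _
            _ = D.ncard := Set.ncard_diff_singleton_add_one hd₀D
            _ ≤ k := hDk
        · intro r hr
          obtain ⟨d, hdD, hdadj⟩ := hDdom r hr
          by_cases hdd₀ : d = d₀
          · subst hdd₀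
            rcases hNd₀ hdadj with h | h
            · exact ⟨v, mem_insert _ _, h⟩
            · exact ⟨w, mem_insert_of_mem _ ⟨hwD, hd₀w.symm⟩, h⟩
          · exact ⟨d, mem_insert_of_mem _ ⟨hdD, hdd₀⟩, hdadj⟩
      · have hd₁w : d₁ ≠ w := fun h => hwD (h ▸ hd₁D)
        have hNd₁ : G.neighborSet d₁ ⊆ G.neighborSet v ∪ G.neighborSet w :=
          hr₁P.2 d₁ hd₁adj.symm
        refine ⟨insert v (insert w ((D \ {d₀}) \ {d₁})), ?_, ?_, mem_insert _ _, ?_⟩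
        · exact insert_subset hv (insert_subset hw
            (((diff_subset).trans diff_subset).trans hDb))
        · have h1 : ((D \ {d₀}) \ {d₁}).ncard + 1 = (D \ {d₀}).ncard :=
            Set.ncard_diff_singleton_add_one ⟨hd₁D, hd₁d₀⟩
          have h2 : (D \ {d₀}).ncard + 1 = D.ncard :=
            Set.ncard_diff_singleton_add_one hd₀D
          calc (insert v (insert w ((D \ {d₀}) \ {d₁}))).ncard
              ≤ (insert w ((D \ {d₀}) \ {d₁})).ncard + 1 := Set.ncard_insert_le _ _
            _ ≤ ((D \ {d₀}) \ {d₁}).ncard + 1 + 1 :=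
                Nat.add_le_add_right (Set.ncard_insert_le _ _) 1
            _ ≤ k := by omega
        · intro r hr
          obtain ⟨d, hdD, hdadj⟩ := hDdom r hr
          by_cases hdd₀ : d = d₀
          · subst hdd₀
            rcases hNd₀ hdadj with h | h
            · exact ⟨v, mem_insert _ _, h⟩
            · exact ⟨w, mem_insert_of_mem _ (mem_insert _ _), h⟩
          by_cases hdd₁ : d = d₁
          · subst hdd₁
            rcases hNd₁ hdadj with h | h
            · exact ⟨v, mem_insert _ _, h⟩
            · exact ⟨w, mem_insert_of_mem _ (mem_insert _ _), h⟩
          · exact ⟨d, mem_insert_of_mem _ (mem_insert_of_mem _ ⟨⟨hdD, hdd₀⟩, hdd₁⟩), hdadj⟩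
    obtain ⟨D₂, hD₂b, hD₂k, hvD₂, hD₂dom⟩ := key
    refine ⟨D₂ \ {v}, ?_, ?_, ?_⟩
    · rintro d ⟨hdD, hdv⟩
      refine ⟨hD₂b hdD, ?_⟩
      rintro (h | h)
      · exact hdv h
      · exact absurd rfl (hdisj.ne_of_mem (hD₂b hdD) (hNred v hv h))
    · rw [Set.ncard_diff_singleton_add_one hvD₂]; exact hD₂k
    · rintro r ⟨hrred, hrNv⟩
      obtain ⟨d, hdD, hdadj⟩ := hD₂dom r hrred
      refine ⟨d, ⟨hdD, ?_⟩, hdadj⟩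
      rintro rfl
      exact hrNv (Or.inr hdadj)
  · rintro ⟨D, hDb, hDk, hDdom⟩
    refine ⟨insert v D, insert_subset hv (fun d hd => (hDb hd).1), ?_, ?_⟩
    · calc (insert v D).ncard ≤ D.ncard + 1 := Set.ncard_insert_le _ _
        _ ≤ k := hDk
    · intro r hr
      by_cases hrv : r ∈ ({v} : Set V) ∪ G.neighborSet v
      · rcases hrv with h | h
        · exact absurd rfl (hdisj.ne_of_mem hv (mem_singleton_iff.mp h ▸ hr)).symm
        · exact ⟨v, mem_insert _ _, h⟩
      · obtain ⟨d, hdD, hdadj⟩ := hDdom r ⟨hr, hrv⟩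
        exact ⟨d, mem_insert_of_mem _ hdD, hdadj⟩
end

section
/- Let G be a bipartite red-blue graph in which no two blue vertices have nested neighborhoods (Rule 1 inapplicable) and no blue vertex has nonempty private neighborhood (Rule 3 inapplicable), and let D be a red-blue dominating set of G. Then for every blue vertex v ∈ D and every red vertex r ∈ N(v), there exists a path of length at most 4 starting at v, having r as its second vertex, and ending at some vertex w ∈ D with w ≠ v; namely, either a path v, r, b with b ∈ D, or a path v, r, b, r', w with b blue, r' red, r' ∉ N(v), and w ∈ D. -/
open Set

/-- In a graph where Rule 1 is inapplicable (no nested blue neighborhoods) and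
Rule 3 is inapplicable (every blue private neighborhood is empty), for every `v ∈ D` and
every red neighbor `r` of `v` there is a path of length at most 4 from `v` through `r`
to another dominating vertex: either `v, r, b` with `b ∈ D`, `b ≠ v`, or
`v, r, b, r', w` with `b` blue, `r'` red, `r' ∉ N(v)`, `w ∈ D`, `w ≠ v`. -/
theorem red_neighbor_on_short_path {V : Type*} [Fintype V] (G : SimpleGraph V)
    (blue red : Set V) (hRB : RedBlue G blue red)
    (hblue : ∀ b ∈ blue, ∀ b' ∈ blue, b ≠ b' → ¬ G.neighborSet b ⊆ G.neighborSet b')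
    (hpriv : ∀ v ∈ blue, privNbhd G v = ∅)
    (D : Set V) (hD : D ⊆ blue) (hdom : Dominates G D red)
    (v : V) (hv : v ∈ D) (r : V) (hr : r ∈ red) (hrv : r ∈ G.neighborSet v) :
    (∃ b ∈ D, b ≠ v ∧ G.Adj r b) ∨
    (∃ b ∈ blue, ∃ r' ∈ red, ∃ w ∈ D, w ≠ v ∧ G.Adj r b ∧ G.Adj b r' ∧ G.Adj r' w ∧
      r' ∉ G.neighborSet v) := by
  obtain ⟨hdisj, hcov, hadj⟩ := hRB
  have hvblue : v ∈ blue := hD hv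
  -- r is not in the (empty) private neighborhood of v
  have hnp : r ∉ privNbhd G v := by
    rw [hpriv v hvblue]; exact notMem_empty r
  simp only [privNbhd, Set.mem_setOf_eq, not_and] at hnp
  push_neg at hnp
  obtain ⟨b, hbr, hns⟩ := hnp hrv
  obtain ⟨r', hbr', hr'v⟩ := Set.not_subset.mp hns
  -- b is blue
  have hbblue : b ∈ blue := by
    rcases hadj r b hbr with ⟨h1, _⟩ | ⟨_, h2⟩
    · exact absurd hr (Set.disjoint_left.mp hdisj h1)
    · exact h2
  -- r' is red
  have hr'red : r' ∈ red := by
    rcases hadj b r' hbr' with ⟨_, h2⟩ | ⟨h1, _⟩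
    · exact h2
    · exact absurd hbblue (Set.disjoint_right.mp hdisj h1)
  obtain ⟨w, hwD, hwr'⟩ := hdom r' hr'red
  refine Or.inr ⟨b, hbblue, r', hr'red, w, hwD, ?_, hbr, hbr', hwr'.symm, hr'v⟩
  rintro rfl
  exact hr'v hwr'
end

section
/- Let G be a bipartite red-blue graph in which no two blue vertices have nested neighborhoods, and let D be a red-blue dominating set of G with |D| ≥ 2. Then for every blue vertex b ∉ D with N(b) ≠ ∅, either there exist distinct v, w ∈ D and red vertices r' ∈ N(b) ∩ N(v), r'' ∈ N(b) ∩ N(w), giving a path v, r', b, r'', w of length 4 between two distinct dominating vertices through b, or N(b) is dominated by a single vertex of D in which case N(b) ⊆ N(v) for some v ∈ D, contradicting the non-nesting assumption; hence the path always exists. -/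
open Set

/-- In a graph with no nested blue neighborhoods, if `D` is a red-blue
dominating set with `|D| ≥ 2`, then every blue vertex `b ∉ D` with `N(b) ≠ ∅` lies on a
path `v, r', b, r'', w` of length 4 between two distinct vertices `v, w ∈ D`. -/
theorem blue_on_short_path {V : Type*} [Fintype V] (G : SimpleGraph V)
    (blue red : Set V) (hRB : RedBlue G blue red)
    (hblue : ∀ b ∈ blue, ∀ b' ∈ blue, b ≠ b' → ¬ G.neighborSet b ⊆ G.neighborSet b')
    (D : Set V) (hD : D ⊆ blue) (hdom : Dominates G D red) (hDcard : 2 ≤ D.ncard)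
    (b : V) (hb : b ∈ blue) (hbD : b ∉ D) (hbne : (G.neighborSet b).Nonempty) :
    ∃ v ∈ D, ∃ w ∈ D, v ≠ w ∧
      ∃ r' ∈ G.neighborSet b ∩ G.neighborSet v,
        ∃ r'' ∈ G.neighborSet b ∩ G.neighborSet w, True := by
  obtain ⟨hdisj, hcover, hadj⟩ := hRB
  have hred : ∀ r ∈ G.neighborSet b, r ∈ red := by
    intro r hr
    rcases hadj b r hr with ⟨_, h⟩ | ⟨h, _⟩
    · exact h
    · exact absurd h (Set.disjoint_left.mp hdisj hb)
  obtain ⟨r0, hr0⟩ := hbne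
  obtain ⟨v, hv, hvr0⟩ := hdom r0 (hred r0 hr0)
  by_cases h : ∃ r ∈ G.neighborSet b, ∃ w ∈ D, G.Adj w r ∧ w ≠ v
  · obtain ⟨r, hr, w, hw, hwr, hwv⟩ := h
    exact ⟨v, hv, w, hw, Ne.symm hwv, r0, ⟨hr0, hvr0⟩, r, ⟨hr, hwr⟩, trivial⟩
  · push_neg at h
    exfalso
    apply hblue b hb v (hD hv) (fun e => hbD (e ▸ hv))
    intro r hr
    obtain ⟨d, hd, hdr⟩ := hdom r (hred r hr)
    have hdv : d = v := h r hr d hd hdr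
    exact (G.mem_neighborSet v r).mpr (hdv ▸ hdr)
end

section
/- Let G be a bipartite red-blue graph reduced under Rules 1 and 2 with a red-blue dominating set D of minimum size. If some blue vertex v has nonempty private neighborhood, then |D| ≥ 1 and v ∈ D; consequently, if the graph is fully reduced (Rules 3 and 4 inapplicable) and nonempty with at least one red vertex, then any minimum red-blue dominating set has size at least 3. -/
open Set

/-- In a graph reduced under Rules 1 and 2 with a minimum-size red-blue
dominating set `D`: if some blue vertex `v` has nonempty private neighborhood then
`|D| ≥ 1` and `v ∈ D`; and if moreover Rules 3 and 4 are inapplicable and there is at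
least one red vertex, then `|D| ≥ 3`. -/
theorem min_rbds_size {V : Type*} [Fintype V] (G : SimpleGraph V)
    (blue red : Set V) (hRB : RedBlue G blue red)
    (hrule1 : ∀ b ∈ blue, ∀ b' ∈ blue, b ≠ b' → ¬ G.neighborSet b ⊆ G.neighborSet b')
    (hrule2 : ∀ r ∈ red, ∀ r' ∈ red, r ≠ r' → ¬ G.neighborSet r' ⊆ G.neighborSet r)
    (D : Set V) (hD : D ⊆ blue) (hdom : Dominates G D red)
    (hmin : ∀ D' : Set V, D' ⊆ blue → Dominates G D' red → D.ncard ≤ D'.ncard) :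
    (∀ v ∈ blue, (privNbhd G v).Nonempty → 1 ≤ D.ncard ∧ v ∈ D) ∧
    ((∀ v ∈ blue, privNbhd G v = ∅) →
      (∀ v ∈ blue, ∀ w ∈ blue, v ≠ w → 1 < (privPair G v w).ncard →
        ∃ d ∈ blue, d ≠ v ∧ d ≠ w ∧ privPair G v w ⊆ G.neighborSet d) →
      red.Nonempty → 3 ≤ D.ncard) := by
  obtain ⟨hdisj, huniv, hadj⟩ := hRB
  have hDfin : D.Finite := Set.toFinite D
  have hredN : ∀ b ∈ blue, G.neighborSet b ⊆ red := by
    intro b hb r hr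
    rcases hadj b r hr with ⟨_, h⟩ | ⟨h, _⟩
    · exact h
    · exact absurd rfl (hdisj.ne_of_mem hb h)
  constructor
  · rintro v hv ⟨r, hrN, hrP⟩
    have hr : r ∈ red := hredN v hv hrN
    obtain ⟨d, hdD, hdr⟩ := hdom r hr
    have hdN : d ∈ G.neighborSet r := hdr.symm
    have hsub : G.neighborSet d ⊆ G.neighborSet v := hrP d hdN
    have hdv : d = v := by
      by_contra hne
      exact hrule1 d (hD hdD) v hv hne hsub
    subst hdv
    exact ⟨(Set.ncard_pos hDfin).mpr ⟨d, hdD⟩, hdD⟩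
  · rintro hP3 hP4 ⟨r0, hr0⟩
    by_contra hlt
    push_neg at hlt
    obtain ⟨d0, hd0, hd0r⟩ := hdom r0 hr0
    have h1 : 1 ≤ D.ncard := (Set.ncard_pos hDfin).mpr ⟨d0, hd0⟩
    interval_cases h : D.ncard
    · -- |D| = 1
      obtain ⟨v, hDV⟩ := Set.ncard_eq_one.mp h
      have hv : v ∈ blue := hD (hDV ▸ rfl)
      have hvdom : ∀ r ∈ red, G.Adj v r := by
        intro r hr
        obtain ⟨d, hd, hdr⟩ := hdom r hr
        rw [hDV, Set.mem_singleton_iff] at hd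
        exact hd ▸ hdr
      have : r0 ∈ privNbhd G v := by
        refine ⟨hvdom r0 hr0, ?_⟩
        intro b hb x hx
        have hbblue : b ∈ blue := by
          rcases hadj r0 b hb with ⟨h, _⟩ | ⟨_, h⟩
          · exact absurd rfl (hdisj.ne_of_mem h hr0)
          · exact h
        exact hvdom x (hredN b hbblue hx)
      rw [hP3 v hv] at this
      exact this
    · -- |D| = 2
      obtain ⟨v, w, hvw, hDV⟩ := Set.ncard_eq_two.mp h
      have hv : v ∈ blue := hD (hDV ▸ Set.mem_insert v {w})
      have hw : w ∈ blue := hD (hDV ▸ Set.mem_insert_of_mem v rfl)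
      have hredsub : red ⊆ privPair G v w := by
        intro r hr
        have hmem : ∀ x ∈ red, x ∈ G.neighborSet v ∪ G.neighborSet w := by
          intro x hx
          obtain ⟨d, hd, hdx⟩ := hdom x hx
          rw [hDV] at hd
          rcases hd with hd | hd
          · exact Or.inl (hd ▸ hdx)
          · exact Or.inr (hd ▸ hdx)
        refine ⟨hmem r hr, ?_⟩
        intro b hb x hx
        have hbblue : b ∈ blue := by
          rcases hadj r b hb with ⟨h, _⟩ | ⟨_, h⟩
          · exact absurd rfl (hdisj.ne_of_mem h hr)
          · exact h
        exact hmem x (hredN b hbblue hx)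
      have hred2 : 2 ≤ red.ncard := by
        by_contra hle
        push_neg at hle
        have hone : ∀ a ∈ red, ∀ b ∈ red, a = b :=
          (Set.ncard_le_one (Set.toFinite red)).mp (Nat.lt_succ_iff.mp hle)
        have : Dominates G {d0} red := by
          intro r hr
          exact ⟨d0, rfl, (hone r hr r0 hr0) ▸ hd0r⟩
        have := hmin {d0} (Set.singleton_subset_iff.mpr (hD hd0)) this
        simp [h] at this
      have hpp : 1 < (privPair G v w).ncard :=
        lt_of_lt_of_le hred2 (Set.ncard_le_ncard hredsub (Set.toFinite _))
      obtain ⟨d, hdblue, _, _, hsub⟩ := hP4 v hv w hw hvw hpp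
      have hdomd : Dominates G {d} red := by
        intro r hr
        have : r ∈ G.neighborSet d := hsub (hredsub hr)
        exact ⟨d, rfl, this⟩
      have := hmin {d} (Set.singleton_subset_iff.mpr hdblue) hdomd
      simp [h] at this
end
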